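/- arXiv:2306.04565 — 2 statements merged into one kernel-verified Lean document; each statement's English description precedes it below -/
import Mathlib

section
/- For every tree T on m ≥ 3 vertices, there exist two subtrees U₁ and U₂ of T such that the union of their vertex sets is the vertex set of T, they share exactly one vertex, and each of U₁ and U₂ has at least m/3 vertices. -/
/-!
The branches of a tree `T` at a vertex `v` are the components of `T - v`. A tree on `m` vertices
has a centroid, a vertex at which every branch has at most `m / 2` vertices: if the branch `B` at
`v` is larger, step to the neighbour `x` of `v` in `B`; the branch at `x` containing `v` is
disjoint from `B` (the edge `vx` is a bridge), and every other branch at `x` lies in `B - x`, so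
all branches at `x` are smaller than `B`. At a centroid the branches can be sorted into two groups,
each with at least `m / 3 - 1` vertices: either one branch is that large and forms a group on its
own, or a maximal collection of branches with at most `2m / 3` vertices in total will do. Joining
`v` to either group spans a subtree.
-/

open scoped Function

theorem Finset.exists_split_le_three_mul_sum_add_one {ι : Type*} [DecidableEq ι] (s : Finset ι)
    (w : ι → ℕ) {m : ℕ} (hsum : ∑ i ∈ s, w i + 1 = m) (hw : ∀ i ∈ s, 3 * w i ≤ 2 * m) :
    ∃ t ⊆ s, m ≤ 3 * (∑ i ∈ t, w i + 1) ∧ m ≤ 3 * (∑ i ∈ s \ t, w i + 1) := by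
  have hsplit : ∀ t ⊆ s, ∑ i ∈ s \ t, w i + ∑ i ∈ t, w i = ∑ i ∈ s, w i :=
    fun t ht => sum_sdiff ht
  by_cases hbig : ∃ i ∈ s, m ≤ 3 * (w i + 1)
  · obtain ⟨i, hi, hwi⟩ := hbig
    have hi' : {i} ⊆ s := singleton_subset_iff.mpr hi
    have := hsplit {i} hi'
    have := hw i hi
    rw [sum_singleton] at *
    exact ⟨{i}, hi', hwi, by omega⟩
  · push Not at hbig
    obtain ⟨t, ht, hmax⟩ := (s.powerset.filter fun t => 3 * ∑ i ∈ t, w i ≤ 2 * m).exists_max_image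
      card ⟨∅, by simp⟩
    rw [mem_filter, mem_powerset] at ht
    have := hsplit t ht.1
    refine ⟨t, ht.1, ?_, by omega⟩
    by_contra! hsmall
    have hts : t ≠ s := by rintro rfl; omega
    obtain ⟨i, his, hit⟩ := exists_of_ssubset (ht.1.ssubset_of_ne hts)
    have := hbig i his
    have hins := hmax (insert i t) <| by
      rw [mem_filter, mem_powerset, sum_insert hit]
      exact ⟨insert_subset his ht.1, by omega⟩
    rw [card_insert_of_notMem hit] at hins
    omega

namespace SimpleGraph

variable {V : Type*} {G : SimpleGraph V} {u v w x : V}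

variable (G) in
def branch (v : V) (c : (G.induce {v}ᶜ).ConnectedComponent) : Set V := Subtype.val '' c.supp

variable {c c' : (G.induce {v}ᶜ).ConnectedComponent}

theorem mem_branch :
    w ∈ G.branch v c ↔ ∃ hw : w ≠ v, (G.induce {v}ᶜ).connectedComponentMk ⟨w, hw⟩ = c := by
  simp [branch, ConnectedComponent.mem_supp_iff]

theorem mem_branch_connectedComponentMk (hw : w ≠ v) :
    w ∈ G.branch v ((G.induce {v}ᶜ).connectedComponentMk ⟨w, hw⟩) :=
  mem_branch.mpr ⟨hw, rfl⟩

theorem ne_of_mem_branch (h : w ∈ G.branch v c) : w ≠ v :=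
  (mem_branch.mp h).1

theorem eq_of_mem_branch (h : w ∈ G.branch v c) (h' : w ∈ G.branch v c') : c = c' := by
  obtain ⟨_, rfl⟩ := mem_branch.mp h
  obtain ⟨_, rfl⟩ := mem_branch.mp h'
  rfl

theorem pairwise_disjoint_branch : Pairwise (Disjoint on (G.branch v)) :=
  fun _ _ hne => Set.disjoint_left.mpr fun _ h h' => hne (eq_of_mem_branch h h')

theorem iUnion_branch : ⋃ c, G.branch v c = {v}ᶜ :=
  Set.eq_of_subset_of_subset (Set.iUnion_subset fun _ _ h => ne_of_mem_branch h)
    fun _ hw => Set.mem_iUnion.mpr ⟨_, mem_branch_connectedComponentMk hw⟩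

theorem insert_iUnion_branch : insert v (⋃ c, G.branch v c) = Set.univ := by
  rw [iUnion_branch, Set.insert_eq, Set.union_compl_self]

theorem mem_branch_of_walk (p : G.Walk u w) (hp : v ∉ p.support) (hu : u ∈ G.branch v c) :
    w ∈ G.branch v c := by
  obtain ⟨hu', rfl⟩ := mem_branch.mp hu
  have hw : w ≠ v := fun h => hp (h ▸ p.end_mem_support)
  have hpv : ∀ y ∈ p.support, y ∈ ({v}ᶜ : Set V) := fun y hy hyv => hp (hyv ▸ hy)
  exact mem_branch.mpr ⟨hw, (ConnectedComponent.sound ⟨p.induce _ hpv⟩).symm⟩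

theorem Walk.IsPath.support_subset_insert_branch {p : G.Walk u v} (hp : p.IsPath)
    (hu : u ∈ G.branch v c) : {y | y ∈ p.support} ⊆ insert v (G.branch v c) := fun y hy => by
  classical
  by_cases hyv : y = v
  · exact Or.inl hyv
  · exact Or.inr (mem_branch_of_walk _ (p.endpoint_notMem_support_takeUntil hp hy (Ne.symm hyv)) hu)

theorem Preconnected.exists_adj_mem_branch (hG : G.Preconnected)
    (c : (G.induce {v}ᶜ).ConnectedComponent) : ∃ x ∈ G.branch v c, G.Adj v x := by
  obtain ⟨⟨u, hu⟩, rfl⟩ := c.exists_rep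
  obtain ⟨p, hp⟩ := (hG u v).exists_isPath
  have hnil : ¬ p.Nil := fun h => hu h.eq
  have hadj := p.adj_penultimate hnil
  refine ⟨p.penultimate, ?_, hadj.symm⟩
  exact (hp.support_subset_insert_branch (mem_branch_connectedComponentMk hu)
    (List.mem_of_mem_dropLast (p.penultimate_mem_dropLast_support hnil))).resolve_left hadj.ne

theorem Preconnected.branch_subset_branch (hG : G.Preconnected) (hx : x ∈ G.branch v c)
    {c' : (G.induce {x}ᶜ).ConnectedComponent} (hv : v ∉ G.branch x c') :
    G.branch x c' ⊆ G.branch v c := by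
  intro w hw
  have hwv : w ≠ v := fun h => hv (h ▸ hw)
  by_contra hwc
  obtain ⟨p, hp⟩ := (hG w v).exists_isPath
  have hxp : x ∉ p.support := fun hxp => by
    have hx' := (hp.support_subset_insert_branch (mem_branch_connectedComponentMk hwv)
      hxp).resolve_left (ne_of_mem_branch hx)
    exact hwc (eq_of_mem_branch hx' hx ▸ mem_branch_connectedComponentMk hwv)
  exact hv (mem_branch_of_walk p hxp hw)

theorem reachable_deleteEdges_of_mem_branch (x : V) (hu : u ∈ G.branch v c)
    (hw : w ∈ G.branch v c) : (G.deleteEdges {s(v, x)}).Reachable u w := by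
  obtain ⟨hu', rfl⟩ := mem_branch.mp hu
  obtain ⟨hw', hc⟩ := mem_branch.mp hw
  let f : G.induce {v}ᶜ →g G.deleteEdges {s(v, x)} :=
    ⟨Subtype.val, fun {a b} hab => by
      refine deleteEdges_adj.mpr ⟨induce_adj.mp hab, fun he => ?_⟩
      rcases Sym2.eq_iff.mp (Set.mem_singleton_iff.mp he) with ⟨h, -⟩ | ⟨-, h⟩
      exacts [a.2 h, b.2 h]⟩
  exact ((ConnectedComponent.exact hc).map f).symm

theorem IsAcyclic.disjoint_branch_of_adj (hG : G.IsAcyclic) (hadj : G.Adj v x)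
    (hx : x ∈ G.branch v c) {c' : (G.induce {x}ᶜ).ConnectedComponent}
    (hv : v ∈ G.branch x c') : Disjoint (G.branch v c) (G.branch x c') := by
  refine Set.disjoint_left.mpr fun w hwc hwc' => ?_
  have hxw := reachable_deleteEdges_of_mem_branch x hx hwc
  have hwv := reachable_deleteEdges_of_mem_branch v hwc' hv
  rw [Sym2.eq_swap] at hwv
  exact isBridge_iff.mp (isAcyclic_iff_forall_adj_isBridge.mp hG hadj) (hxw.trans hwv).symm

theorem Preconnected.connected_induce_insert_biUnion_branch (hG : G.Preconnected)
    (S : Set (G.induce {v}ᶜ).ConnectedComponent) :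
    ((⊤ : G.Subgraph).induce (insert v (⋃ c ∈ S, G.branch v c))).Connected := by
  rw [← connected_induce_iff]
  refine induce_connected_of_patches v (Set.mem_insert v _) fun {w} hw => ?_
  rcases hw with rfl | hw
  · exact ⟨{w}, by simp, rfl, rfl, Reachable.refl _⟩
  obtain ⟨c, hcS, hwc⟩ := Set.mem_iUnion₂.mp hw
  obtain ⟨p, hp⟩ := (hG w v).exists_isPath
  exact ⟨_, (hp.support_subset_insert_branch hwc).trans
    (Set.insert_subset_insert (Set.subset_biUnion_of_mem hcS)), p.end_mem_support,
    p.start_mem_support, p.connected_induce_support.preconnected _ _⟩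

theorem ncard_insert_biUnion_branch [Finite V] (S : Finset (G.induce {v}ᶜ).ConnectedComponent) :
    (insert v (⋃ c ∈ (S : Set _), G.branch v c)).ncard = ∑ c ∈ S, (G.branch v c).ncard + 1 := by
  have hv : v ∉ ⋃ c ∈ (S : Set _), G.branch v c := by
    simp only [Set.mem_iUnion]
    exact fun ⟨_, _, h⟩ => ne_of_mem_branch h rfl
  rw [Set.ncard_insert_of_notMem hv, S.finite_toSet.ncard_biUnion (fun _ _ => Set.toFinite _)
    (pairwise_disjoint_branch.set_pairwise _), finsum_mem_coe_finset]

theorem sum_ncard_branch_add_one [Finite V] [Fintype (G.induce {v}ᶜ).ConnectedComponent] :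
    ∑ c, (G.branch v c).ncard + 1 = Nat.card V := by
  rw [← Set.ncard_univ, ← ncard_insert_biUnion_branch, Finset.coe_univ, Set.biUnion_univ,
    insert_iUnion_branch]

theorem insert_biUnion_branch_union_compl (S : Set (G.induce {v}ᶜ).ConnectedComponent) :
    insert v (⋃ c ∈ S, G.branch v c) ∪ insert v (⋃ c ∈ Sᶜ, G.branch v c) = Set.univ := by
  rw [← Set.insert_union_distrib, ← Set.biUnion_union, Set.union_compl_self, Set.biUnion_univ,
    insert_iUnion_branch]

theorem insert_biUnion_branch_inter_compl (S : Set (G.induce {v}ᶜ).ConnectedComponent) :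
    insert v (⋃ c ∈ S, G.branch v c) ∩ insert v (⋃ c ∈ Sᶜ, G.branch v c) = {v} := by
  have hdisj : Disjoint (⋃ c ∈ S, G.branch v c) (⋃ c ∈ Sᶜ, G.branch v c) :=
    Set.disjoint_iUnion₂_left.mpr fun _ hc => Set.disjoint_iUnion₂_right.mpr fun _ hc' =>
      pairwise_disjoint_branch fun h => hc' (h ▸ hc)
  rw [← Set.insert_inter_distrib, hdisj.inter_eq, insert_empty_eq]

theorem IsTree.exists_branch_ncard_lt [Finite V] (hG : G.IsTree)
    (hc : Nat.card V < 2 * (G.branch v c).ncard) :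
    ∃ x, ∀ c' : (G.induce {x}ᶜ).ConnectedComponent,
      (G.branch x c').ncard < (G.branch v c).ncard := by
  obtain ⟨x, hx, hadj⟩ := hG.connected.preconnected.exists_adj_mem_branch c
  refine ⟨x, fun c' => ?_⟩
  by_cases hv : v ∈ G.branch x c'
  · have := Set.ncard_union_eq (hG.isAcyclic.disjoint_branch_of_adj hadj hx hv)
    have := Set.ncard_le_card (G.branch v c ∪ G.branch x c')
    omega
  · refine Set.ncard_lt_ncard ((Set.ssubset_iff_of_subset
      (hG.connected.preconnected.branch_subset_branch hx hv)).mpr ⟨x, hx, ?_⟩)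
    exact fun h => ne_of_mem_branch h rfl

theorem IsTree.exists_centroid [Finite V] [Nonempty V] (hG : G.IsTree) :
    ∃ v, ∀ c : (G.induce {v}ᶜ).ConnectedComponent, 2 * (G.branch v c).ncard ≤ Nat.card V := by
  suffices ∀ n (v : V), (∀ c : (G.induce {v}ᶜ).ConnectedComponent, (G.branch v c).ncard < n) →
      ∃ v, ∀ c : (G.induce {v}ᶜ).ConnectedComponent, 2 * (G.branch v c).ncard ≤ Nat.card V from
    this _ (Classical.arbitrary V) fun c => Nat.lt_succ_of_le (Set.ncard_le_card _)
  intro n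
  induction n using Nat.strong_induction_on with
  | _ n ih =>
    intro v hv
    by_cases! hcen : ∀ c, 2 * (G.branch v c).ncard ≤ Nat.card V
    · exact ⟨v, hcen⟩
    obtain ⟨c, hc⟩ := hcen
    obtain ⟨x, hx⟩ := hG.exists_branch_ncard_lt hc
    exact ih _ (hv c) x hx

end SimpleGraph

theorem tree_split_into_two_subtrees_general {V : Type*} [Fintype V] (T : SimpleGraph V)
    (hT : T.IsTree) (m : ℕ) (hm : m = Fintype.card V) :
    ∃ U₁ U₂ : T.Subgraph, U₁.Connected ∧ U₂.Connected ∧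
      U₁.verts ∪ U₂.verts = Set.univ ∧ (U₁.verts ∩ U₂.verts).ncard = 1 ∧
      m ≤ 3 * U₁.verts.ncard ∧ m ≤ 3 * U₂.verts.ncard := by
  classical
  have : Nonempty V := hT.connected.nonempty
  rw [← Nat.card_eq_fintype_card] at hm
  subst hm
  obtain ⟨v, hv⟩ := hT.exists_centroid
  obtain ⟨t, -, h₁, h₂⟩ := Finset.univ.exists_split_le_three_mul_sum_add_one
    (fun c => (T.branch v c).ncard) SimpleGraph.sum_ncard_branch_add_one
    fun c _ => by have := hv c; omega
  rw [← SimpleGraph.ncard_insert_biUnion_branch] at h₁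
  rw [← Finset.compl_eq_univ_sdiff, ← SimpleGraph.ncard_insert_biUnion_branch,
    Finset.coe_compl] at h₂
  have hconn := hT.connected.preconnected.connected_induce_insert_biUnion_branch (v := v)
  refine ⟨_, _, hconn t, hconn (↑t)ᶜ, SimpleGraph.insert_biUnion_branch_union_compl _, ?_, h₁, h₂⟩
  rw [SimpleGraph.Subgraph.induce_verts, SimpleGraph.Subgraph.induce_verts,
    SimpleGraph.insert_biUnion_branch_inter_compl, Set.ncard_singleton]

/-- Every tree on `m ≥ 3` vertices splits into two subtrees covering all vertices,
sharing exactly one vertex, each with at least `m/3` vertices. -/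
theorem tree_split_into_two_subtrees {V : Type*} [Fintype V] (T : SimpleGraph V)
    (hT : T.IsTree) (m : ℕ) (hm : m = Fintype.card V) (h3 : 3 ≤ m) :
    ∃ U₁ U₂ : T.Subgraph, U₁.Connected ∧ U₂.Connected ∧
      U₁.verts ∪ U₂.verts = Set.univ ∧ (U₁.verts ∩ U₂.verts).ncard = 1 ∧
      m ≤ 3 * U₁.verts.ncard ∧ m ≤ 3 * U₂.verts.ncard :=
  tree_split_into_two_subtrees_general T hT m hm
end

section
/- Let T be the 'spider' tree on m = 3k + 1 vertices formed by joining one endpoint of each of three disjoint paths of k vertices to a single central vertex v. Then there do not exist two vertex-disjoint subtrees of T each having more than m/3 vertices. -/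
/-- The spider tree on `3k + 1` vertices: a center (`none`) joined to one endpoint of each of
three disjoint paths on `k` vertices. -/
def spider (k : ℕ) : SimpleGraph (Option (Fin 3 × Fin k)) :=
  SimpleGraph.fromRel fun u v =>
    match u, v with
    | none, some (_, t) => (t : ℕ) = 0
    | some (i, s), some (i', t) => i = i' ∧ (s : ℕ) + 1 = (t : ℕ)
    | _, _ => False

/-- Leg index of a vertex; center gets `0`. -/
def spiderIdx {k : ℕ} : Option (Fin 3 × Fin k) → Fin 3 :=
  fun x => x.elim 0 Prod.fst

lemma spider_adj_idx {k : ℕ} {a b : Option (Fin 3 × Fin k)}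
    (h : (spider k).Adj a b) (ha : a ≠ none) (hb : b ≠ none) :
    spiderIdx a = spiderIdx b := by
  obtain ⟨p, rfl⟩ := Option.ne_none_iff_exists'.mp ha
  obtain ⟨q, rfl⟩ := Option.ne_none_iff_exists'.mp hb
  obtain ⟨i, s⟩ := p
  obtain ⟨i', t⟩ := q
  rcases h with ⟨-, h | h⟩
  · exact h.1
  · exact h.1.symm

lemma idx_const {k : ℕ} (U : (spider k).Subgraph) (hn : none ∉ U.verts) :
    ∀ {a b : U.verts}, U.coe.Reachable a b → spiderIdx a.1 = spiderIdx b.1 := by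
  intro a b ⟨w⟩
  induction w with
  | nil => rfl
  | cons h p ih =>
    refine Eq.trans ?_ ih
    exact spider_adj_idx (U.adj_sub h)
      (fun he => hn (he ▸ (by exact Subtype.mem _)))
      (fun he => hn (he ▸ (by exact Subtype.mem _)))

lemma small_if_no_center {k : ℕ} (U : (spider k).Subgraph) (hc : U.Connected)
    (hn : none ∉ U.verts) : U.verts.ncard ≤ k := by
  obtain ⟨v₀, hv₀⟩ := hc.nonempty
  have hsub : U.verts ⊆ Set.range (fun s : Fin k => (some (spiderIdx v₀, s) :
      Option (Fin 3 × Fin k))) := by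
    intro x hx
    have hr : U.coe.Reachable ⟨v₀, hv₀⟩ ⟨x, hx⟩ := hc.1.preconnected _ _
    have hi := idx_const U hn hr
    obtain ⟨⟨i, s⟩, rfl⟩ := Option.ne_none_iff_exists'.mp (fun he : x = none => hn (he ▸ hx))
    exact ⟨s, by simp [spiderIdx] at hi ⊢; exact hi⟩
  calc U.verts.ncard ≤ (Set.range (fun s : Fin k =>
        (some (spiderIdx v₀, s) : Option (Fin 3 × Fin k)))).ncard :=
      Set.ncard_le_ncard hsub (Set.toFinite _)
    _ = k := by
      rw [← Set.image_univ, Set.ncard_image_of_injective _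
        (fun a b h => by simpa using h), Set.ncard_univ]
      simp

/-- The spider tree on `m = 3k + 1` vertices has no two vertex-disjoint subtrees each with
more than `m/3` vertices. -/
theorem spider_no_two_large_disjoint_subtrees (k : ℕ) (hk : 1 ≤ k) (m : ℕ)
    (hm : m = 3 * k + 1) :
    ¬ ∃ U₁ U₂ : (spider k).Subgraph, U₁.Connected ∧ U₂.Connected ∧
      Disjoint U₁.verts U₂.verts ∧
      m < 3 * U₁.verts.ncard ∧ m < 3 * U₂.verts.ncard := by
  rintro ⟨U₁, U₂, h1, h2, hd, n1, n2⟩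
  have key : ∀ U : (spider k).Subgraph, U.Connected → m < 3 * U.verts.ncard →
      none ∈ U.verts := by
    intro U hc hn
    by_contra hno
    have := small_if_no_center U hc hno
    omega
  exact Set.disjoint_left.mp hd (key U₁ h1 n1) (key U₂ h2 n2)
end
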